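/- arXiv:2009.04102 — 2 statements merged into one kernel-verified Lean document; each statement's English description precedes it below -/
import Mathlib

section
/- Let a ≠ 0 and define the modified formal Lagrangian for the viscous Burgers' equation as L̂(u,v) = v·(u_t + u·u_x − a·u_{xx}) + a·u·u_{xx}, for smooth u, v : ℝ² → ℝ. Then E_u(L̂) = −v_t − u·v_x − a·v_{xx} + 2a·u_{xx}, and substituting v = u gives E_u(L̂)|_{v=u} = −(u_t + u·u_x − a·u_{xx}). -/
noncomputable def pt (f : ℝ → ℝ → ℝ) : ℝ → ℝ → ℝ := fun t x => deriv (fun s => f s x) t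

noncomputable def px (f : ℝ → ℝ → ℝ) : ℝ → ℝ → ℝ := fun t x => deriv (fun y => f t y) x

def Smooth2 (f : ℝ → ℝ → ℝ) : Prop := ContDiff ℝ (⊤ : ℕ∞) (Function.uncurry f)

lemma slice_hasDerivAt {f : ℝ → ℝ → ℝ} (hf : Smooth2 f) (t x : ℝ) :
    HasDerivAt (fun y => f t y) (fderiv ℝ (Function.uncurry f) (t, x) (0, 1)) x := by
  have h1 : HasDerivAt (fun y : ℝ => ((t, y) : ℝ × ℝ)) ((0 : ℝ), (1 : ℝ)) x :=
    HasDerivAt.prodMk (hasDerivAt_const x t) (hasDerivAt_id x)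
  have h2 := (hf.differentiable (by simp) (t, x)).hasFDerivAt
  exact h2.comp_hasDerivAt x h1

lemma slice_diff {f : ℝ → ℝ → ℝ} (hf : Smooth2 f) (t : ℝ) :
    Differentiable ℝ (fun y => f t y) :=
  fun x => (slice_hasDerivAt hf t x).differentiableAt

lemma px_eq {f : ℝ → ℝ → ℝ} (hf : Smooth2 f) (t x : ℝ) :
    px f t x = fderiv ℝ (Function.uncurry f) (t, x) (0, 1) :=
  (slice_hasDerivAt hf t x).deriv

lemma smooth_px {f : ℝ → ℝ → ℝ} (hf : Smooth2 f) : Smooth2 (px f) := by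
  have : Function.uncurry (px f)
      = fun p : ℝ × ℝ => fderiv ℝ (Function.uncurry f) p (0, 1) := by
    funext p
    exact px_eq hf p.1 p.2
  rw [Smooth2, this]
  exact (hf.fderiv_right (by simp)).clm_apply contDiff_const

/-- For the modified formal Lagrangian `L̂ = v (u_t + u u_x − a u_{xx}) + a u u_{xx}` of the
viscous Burgers' equation, `E_u(L̂) = ∂L̂/∂u − D_t(∂L̂/∂u_t) − D_x(∂L̂/∂u_x) + D_x²(∂L̂/∂u_{xx})`
equals `−v_t − u v_x − a v_{xx} + 2a u_{xx}`, which at `v = u` equals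
`−(u_t + u u_x − a u_{xx})`. Here `∂L̂/∂u = v u_x + a u_{xx}`, `∂L̂/∂u_t = v`,
`∂L̂/∂u_x = v u`, `∂L̂/∂u_{xx} = −a v + a u`. -/
theorem burgers_modified_formal_lagrangian (a : ℝ) (ha : a ≠ 0)
    (u v : ℝ → ℝ → ℝ) (hu : Smooth2 u) (hv : Smooth2 v) :
    (∀ t x : ℝ,
        (v t x * px u t x + a * px (px u) t x)
          - pt v t x
          - px (fun t x => v t x * u t x) t x
          + px (px (fun t x => -(a * v t x) + a * u t x)) t x
        = -(pt v t x) - u t x * px v t x - a * px (px v) t x + 2 * a * px (px u) t x) ∧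
    (v = u →
      ∀ t x : ℝ,
        -(pt v t x) - u t x * px v t x - a * px (px v) t x + 2 * a * px (px u) t x
          = -(pt u t x + u t x * px u t x - a * px (px u) t x)) := by
  constructor
  · intro t x
    have hprod : px (fun t x => v t x * u t x) t x
        = px v t x * u t x + v t x * px u t x := by
      simp only [px]
      rw [deriv_fun_mul ((slice_diff hv t) x) ((slice_diff hu t) x)]
    have hlin : px (fun t x => -(a * v t x) + a * u t x)
        = fun t x => -(a * px v t x) + a * px u t x := by
      funext t x
      simp only [px]
      rw [deriv_fun_add (f := fun y => -(a * v t y)) (((slice_diff hv t).const_mul a).neg x)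
        (((slice_diff hu t).const_mul a) x), deriv.fun_neg, deriv_const_mul _ ((slice_diff hv t) x),
        deriv_const_mul _ ((slice_diff hu t) x)]
    have hlin2 : px (px (fun t x => -(a * v t x) + a * u t x)) t x
        = -(a * px (px v) t x) + a * px (px u) t x := by
      rw [hlin]
      have d1 : Differentiable ℝ (fun y => deriv (fun z => v t z) y) :=
        slice_diff (smooth_px hv) t
      have d2 : Differentiable ℝ (fun y => deriv (fun z => u t z) y) :=
        slice_diff (smooth_px hu) t
      simp only [px]
      rw [deriv_fun_add (f := fun y => -(a * deriv (fun z => v t z) y)) ((d1.const_mul a).neg x) ((d2.const_mul a) x), deriv.fun_neg,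
        deriv_const_mul _ (d1 x), deriv_const_mul _ (d2 x)]
    rw [hprod, hlin2]
    ring
  · intro hvu t x
    subst hvu
    ring
end

section
/- Define the modified formal Lagrangian for the Fornberg–Whitham equation as L̂ = v·(u_t − u_{xxt} + u_x + u·u_x − 3u_x u_{xx} − u·u_{xxx}) + u·u_x·u_{xx} for smooth u, v : ℝ² → ℝ. Then the Euler–Lagrange expression E_u(L̂) equals −v_t + v_{xxt} − v_x − u·v_x + 3u_x·u_{xx} + u·v_{xxx}, and substituting v = u gives E_u(L̂)|_{v=u} = −(u_t − u_{xxt} + u_x + u·u_x − 3u_x u_{xx} − u·u_{xxx}). -/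
open scoped ContDiff

private lemma slice_contDiff {f : ℝ → ℝ → ℝ} (hf : Smooth2 f) (t : ℝ) :
    ContDiff ℝ ∞ (fun y => f t y) :=
  (hf.of_le (by simp)).comp (contDiff_const.prodMk contDiff_id)

private lemma pt_slice_contDiff {f : ℝ → ℝ → ℝ} (hf : Smooth2 f) (t : ℝ) :
    ContDiff ℝ ∞ (fun y => deriv (fun s => f s y) t) := by
  have h1 : ContDiff ℝ ∞ (fun p : ℝ × ℝ => fderiv ℝ (Function.uncurry f) p (1, 0)) :=
    (hf.fderiv_right (by simp)).clm_apply contDiff_const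
  have h2 : ∀ y : ℝ, deriv (fun s => f s y) t
      = fderiv ℝ (Function.uncurry f) (t, y) (1, 0) := by
    intro y
    have hd : HasFDerivAt (Function.uncurry f) (fderiv ℝ (Function.uncurry f) (t, y)) (t, y) :=
      ((hf.differentiable (by simp)) (t, y)).hasFDerivAt
    exact (hd.comp_hasDerivAt t (HasDerivAt.prodMk (hasDerivAt_id t) (hasDerivAt_const t y))).deriv
  have hfun : (fun y : ℝ => deriv (fun s => f s y) t)
      = fun y => fderiv ℝ (Function.uncurry f) (t, y) (1, 0) := funext h2
  rw [hfun]
  exact h1.comp (contDiff_const.prodMk contDiff_id)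

private lemma key (U V W Wn : ℝ → ℝ) (hU : ContDiff ℝ ∞ U) (hV : ContDiff ℝ ∞ V)
    (hW : ContDiff ℝ ∞ W) (hWn : Wn = fun y => -(W y)) (x : ℝ) :
    (V x * (deriv U x - deriv (deriv (deriv U)) x) + deriv U x * deriv (deriv U) x)
      - W x
      - deriv (fun y => V y * (1 + U y - 3 * deriv (deriv U) y) + U y * deriv (deriv U) y) x
      + deriv (deriv (fun y => -(3 * V y * deriv U y) + U y * deriv U y)) x
      - deriv (deriv Wn) x
      - deriv (deriv (deriv (fun y => -(V y * U y)))) x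
    = -(W x) + deriv (deriv W) x - deriv V x - U x * deriv V x
        + 3 * deriv U x * deriv (deriv U) x + U x * deriv (deriv (deriv V)) x := by
  have hU1 : ContDiff ℝ ∞ (deriv U) := (contDiff_infty_iff_deriv.mp hU).2
  have hU2 : ContDiff ℝ ∞ (deriv (deriv U)) := (contDiff_infty_iff_deriv.mp hU1).2
  have hV1 : ContDiff ℝ ∞ (deriv V) := (contDiff_infty_iff_deriv.mp hV).2
  have hV2 : ContDiff ℝ ∞ (deriv (deriv V)) := (contDiff_infty_iff_deriv.mp hV1).2
  have dU : Differentiable ℝ U := (contDiff_infty_iff_deriv.mp hU).1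
  have dU1 : Differentiable ℝ (deriv U) := (contDiff_infty_iff_deriv.mp hU1).1
  have dU2 : Differentiable ℝ (deriv (deriv U)) := (contDiff_infty_iff_deriv.mp hU2).1
  have dV : Differentiable ℝ V := (contDiff_infty_iff_deriv.mp hV).1
  have dV1 : Differentiable ℝ (deriv V) := (contDiff_infty_iff_deriv.mp hV1).1
  have dV2 : Differentiable ℝ (deriv (deriv V)) := (contDiff_infty_iff_deriv.mp hV2).1
  have hWn' : deriv (deriv Wn) x = -(deriv (deriv W) x) := by
    rw [hWn, deriv.fun_neg', deriv.fun_neg]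
  have hB : deriv (fun y => -(3 * V y * deriv U y) + U y * deriv U y)
      = fun y => -(3 * (deriv V y * deriv U y) + 3 * (V y * deriv (deriv U) y))
          + (deriv U y * deriv U y + U y * deriv (deriv U) y) := by
    funext y
    simp (disch := fun_prop) only [deriv_fun_add, deriv.fun_neg, deriv_fun_mul, deriv_const_mul_field, deriv_const']
    ring
  have hC1 : deriv (fun y => -(V y * U y)) = fun y => -(deriv V y * U y + V y * deriv U y) := by
    funext y
    simp (disch := fun_prop) only [deriv.fun_neg, deriv_fun_mul]
  have hC2 : deriv (deriv (fun y => -(V y * U y)))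
      = fun y => -((deriv (deriv V) y * U y + deriv V y * deriv U y)
          + (deriv V y * deriv U y + V y * deriv (deriv U) y)) := by
    rw [hC1]
    funext y
    simp (disch := fun_prop) only [deriv.fun_neg, deriv_fun_add, deriv_fun_mul]
  rw [hWn', hB, hC2]
  simp (disch := fun_prop) only [deriv_fun_add, deriv_fun_sub, deriv_fun_mul, deriv.fun_neg,
    deriv_const_mul_field, deriv_const_add, deriv_const']
  ring

/-- For the modified formal Lagrangian
`L̂ = v (u_t − u_{xxt} + u_x + u u_x − 3 u_x u_{xx} − u u_{xxx}) + u u_x u_{xx}` of the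
Fornberg–Whitham equation, the Euler–Lagrange expression
`E_u(L̂) = ∂L̂/∂u − D_t(∂L̂/∂u_t) − D_x(∂L̂/∂u_x) + D_x²(∂L̂/∂u_{xx}) − D_x²D_t(∂L̂/∂u_{xxt}) − D_x³(∂L̂/∂u_{xxx})`
equals `−v_t + v_{xxt} − v_x − u v_x + 3 u_x u_{xx} + u v_{xxx}`, which at `v = u` equals
minus the Fornberg–Whitham expression. Here `∂L̂/∂u = v (u_x − u_{xxx}) + u_x u_{xx}`,
`∂L̂/∂u_t = v`, `∂L̂/∂u_x = v (1 + u − 3 u_{xx}) + u u_{xx}`,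
`∂L̂/∂u_{xx} = −3 v u_x + u u_x`, `∂L̂/∂u_{xxt} = −v`, `∂L̂/∂u_{xxx} = −v u`. -/
theorem fw_modified_formal_lagrangian (u v : ℝ → ℝ → ℝ)
    (hu : Smooth2 u) (hv : Smooth2 v) :
    (∀ t x : ℝ,
        (v t x * (px u t x - px (px (px u)) t x) + px u t x * px (px u) t x)
          - pt v t x
          - px (fun t x => v t x * (1 + u t x - 3 * px (px u) t x)
              + u t x * px (px u) t x) t x
          + px (px (fun t x => -(3 * v t x * px u t x) + u t x * px u t x)) t x
          - px (px (pt (fun t x => -(v t x)))) t x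
          - px (px (px (fun t x => -(v t x * u t x)))) t x
        = -(pt v t x) + px (px (pt v)) t x - px v t x - u t x * px v t x
            + 3 * px u t x * px (px u) t x + u t x * px (px (px v)) t x) ∧
    (v = u →
      ∀ t x : ℝ,
        -(pt v t x) + px (px (pt v)) t x - px v t x - u t x * px v t x
            + 3 * px u t x * px (px u) t x + u t x * px (px (px v)) t x
          = -(pt u t x - px (px (pt u)) t x + px u t x + u t x * px u t x
              - 3 * px u t x * px (px u) t x - u t x * px (px (px u)) t x)) := by
  constructor
  · intro t x
    exact key (fun y => u t y) (fun y => v t y) (fun y => deriv (fun s => v s y) t)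
      (fun y => deriv (fun s => -(v s y)) t) (slice_contDiff hu t) (slice_contDiff hv t)
      (pt_slice_contDiff hv t) (funext fun y => deriv.neg) x
  · intro hvu t x
    subst hvu
    ring
end
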